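/- Let k be a field, k̄ an algebraic closure of k, and R a finitely generated k-algebra. Then the Krull dimension of k̄ ⊗_k R equals the Krull dimension of R. -/
import Mathlib


open TensorProduct

section IntegralDim

variable {R S : Type*} [CommRing R] [CommRing S] [Algebra R S]

private lemma ringKrullDim_le_of_isIntegral [Algebra.IsIntegral R S] :
    ringKrullDim S ≤ ringKrullDim R :=
  Order.krullDim_le_of_strictMono
    (fun I : PrimeSpectrum S =>
      (⟨I.asIdeal.comap (algebraMap R S), inferInstance⟩ : PrimeSpectrum R))
    (fun I J hIJ => by
      obtain ⟨x, hxJ, hxI⟩ := SetLike.exists_of_lt ((PrimeSpectrum.asIdeal_lt_asIdeal I J).mpr hIJ)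
      exact (PrimeSpectrum.asIdeal_lt_asIdeal _ _).mp <|
        Ideal.comap_lt_comap_of_integral_mem_sdiff
          ((PrimeSpectrum.asIdeal_lt_asIdeal I J).mpr hIJ).le ⟨hxJ, hxI⟩
          (Algebra.IsIntegral.isIntegral x))

private lemma exists_ltSeries_of_isIntegral [Algebra.IsIntegral R S]
    (hinj : Function.Injective (algebraMap R S)) :
    ∀ n (p : LTSeries (PrimeSpectrum R)), p.length = n →
      ∃ q : LTSeries (PrimeSpectrum S), q.length = n ∧
        q.last.asIdeal.comap (algebraMap R S) = p.last.asIdeal := by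
  have hker : RingHom.ker (algebraMap R S) = ⊥ :=
    (RingHom.injective_iff_ker_eq_bot _).mp hinj
  intro n
  induction n with
  | zero =>
    intro p hp
    obtain ⟨Q, -, hQprime, hQ⟩ :=
      Ideal.exists_ideal_over_prime_of_isIntegral p.last.asIdeal ⊥
        (by rw [← RingHom.ker_eq_comap_bot (algebraMap R S), hker]; exact bot_le)
    exact ⟨RelSeries.singleton _ ⟨Q, hQprime⟩, rfl, by simpa using hQ⟩
  | succ n ih =>
    intro p hp
    obtain ⟨q, hlen, hlast⟩ := ih p.eraseLast (by simp [hp])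
    have hlt : p.eraseLast.last < p.last :=
      p.eraseLast_last_rel_last (by omega)
    obtain ⟨Q, hQge, hQprime, hQ⟩ :=
      Ideal.exists_ideal_over_prime_of_isIntegral p.last.asIdeal q.last.asIdeal
        (by rw [hlast]; exact ((PrimeSpectrum.asIdeal_lt_asIdeal _ _).mpr hlt).le)
    have hne : q.last.asIdeal ≠ Q := by
      intro h
      apply hlt.ne
      apply PrimeSpectrum.ext
      rw [← hlast, h, hQ]
    have hq : q.last < (⟨Q, hQprime⟩ : PrimeSpectrum S) :=
      (PrimeSpectrum.asIdeal_lt_asIdeal _ _).mp (lt_of_le_of_ne hQge hne)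
    exact ⟨q.snoc _ hq, by simp [hlen], by simpa using hQ⟩

private lemma le_ringKrullDim_of_isIntegral [Algebra.IsIntegral R S]
    (hinj : Function.Injective (algebraMap R S)) :
    ringKrullDim R ≤ ringKrullDim S := by
  rw [ringKrullDim, Order.krullDim]
  apply iSup_le
  intro p
  obtain ⟨q, hlen, -⟩ := exists_ltSeries_of_isIntegral hinj p.length p rfl
  rw [← hlen]
  exact Order.LTSeries.length_le_krullDim q

private lemma ringKrullDim_eq_of_isIntegral [Algebra.IsIntegral R S]
    (hinj : Function.Injective (algebraMap R S)) :
    ringKrullDim S = ringKrullDim R :=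
  le_antisymm ringKrullDim_le_of_isIntegral (le_ringKrullDim_of_isIntegral hinj)

end IntegralDim

/-- Base change of a finitely generated algebra over a field to the algebraic closure
preserves Krull dimension. -/
theorem ringKrullDim_baseChange_algebraicClosure (k : Type*) [Field k]
    (R : Type*) [CommRing R] [Algebra k R] [Algebra.FiniteType k R] :
    ringKrullDim (AlgebraicClosure k ⊗[k] R) = ringKrullDim R := by
  set K := AlgebraicClosure k
  letI : Algebra R (K ⊗[k] R) := Algebra.TensorProduct.rightAlgebra
  haveI : IsScalarTower k R (K ⊗[k] R) := Algebra.TensorProduct.right_isScalarTower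
  haveI : Algebra.IsIntegral k K :=
    ⟨fun a => (Algebra.IsAlgebraic.isAlgebraic (R := k) a).isIntegral⟩
  haveI : Algebra.IsIntegral R (K ⊗[k] R) := by
    constructor
    intro x
    induction x using TensorProduct.induction_on with
    | zero => exact isIntegral_zero
    | tmul a r =>
      have h1 : IsIntegral k (a ⊗ₜ[k] (1 : R)) :=
        (Algebra.IsIntegral.isIntegral (R := k) a).map
          (Algebra.TensorProduct.includeLeft (S := k))
      have h2 : IsIntegral R (a ⊗ₜ[k] (1 : R)) := h1.tower_top
      have hrw : a ⊗ₜ[k] r = (a ⊗ₜ[k] (1 : R)) * algebraMap R (K ⊗[k] R) r := by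
        show a ⊗ₜ[k] r = (a ⊗ₜ[k] (1 : R)) * Algebra.TensorProduct.includeRight r
        rw [Algebra.TensorProduct.includeRight_apply, Algebra.TensorProduct.tmul_mul_tmul,
          mul_one, one_mul]
      rw [hrw]
      exact h2.mul (isIntegral_algebraMap)
    | add x y hx hy => exact hx.add hy
  have hinj : Function.Injective (algebraMap R (K ⊗[k] R)) := by
    have h1 : Function.Injective ((Algebra.linearMap k K).rTensor R) :=
      Module.Flat.rTensor_preserves_injective_linearMap _
        (algebraMap k K).injective
    intro a b h
    apply (TensorProduct.lid k R).symm.injective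
    apply h1
    have key : ∀ r : R, (Algebra.linearMap k K).rTensor R ((TensorProduct.lid k R).symm r)
        = algebraMap R (K ⊗[k] R) r := by
      intro r
      show (Algebra.linearMap k K).rTensor R ((1 : k) ⊗ₜ[k] r)
        = Algebra.TensorProduct.includeRight r
      rw [LinearMap.rTensor_tmul, Algebra.TensorProduct.includeRight_apply]
      simp
    rw [key, key, h]
  exact ringKrullDim_eq_of_isIntegral hinj
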